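/- Let N ≥ 8 be an integer and set M = ⌈√(N/8)⌉. For each integer m ≥ 0, let S_m be the resampling matrix on ℝ^{Π(m)} for sample size N, and let v^{(m)}, f^{(m)} ∈ ℝ^{Π(m)} be vectors. Let α, β : ℕ → ℝ satisfy |v^{(m)}_π| ≤ α_m for all π ∈ Π(m) and Σ_{π ∈ Π(m)} |f^{(m)}_π| ≤ β_m, with α_m, β_m ≥ 0, and suppose γ_m := Σ_{j=m}^∞ α_j β_j is finite for every m, with γ_M > 0 and γ_0 ≥ γ_M. Set k = ⌊ (log₂ γ_0 − log₂ γ_M)/2 ⌋. Then the total bias of the k-times iterated bootstrap satisfies Σ_{m=0}^∞ | (v^{(m)})ᵀ (Id − S_m)^{k+1} f^{(m)} | ≤ 4·√( γ_0 · γ_M ). -/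

import Mathlib

open Finset
open scoped Classical

/-- The resampling matrix `S ∈ ℝ^{Π(m)×Π(m)}` for sample size `N`:
`S_{π,σ} = N^{(#π)} / N^{#σ}` if `σ ≤ π`, and `0` otherwise. -/
noncomputable def resampS (N m : ℕ) :
    Matrix (Finpartition (Finset.univ : Finset (Fin m)))
      (Finpartition (Finset.univ : Finset (Fin m))) ℝ :=
  fun π σ =>
    if σ ≤ π then (N.descFactorial π.parts.card : ℝ) / (N : ℝ) ^ σ.parts.card else 0

/-!
Because `S_m` is column-stochastic (sorting the maps `Fin m → Fin N` that are constant on the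
blocks of `σ` by their kernel gives `∑_{π ≥ σ} N^{(#π)} = N^{#σ}`), the column of `1 - S_m`
indexed by `σ` has ℓ¹-norm `2 (1 - N^{(s)} / N^s)` with `s = #σ`. This is at most `2` always and
at most `2 m² / N ≤ 1/4` when `m < M`, by Bernoulli's inequality. So `(1 - S_m)^{k+1}` scales
ℓ¹-norms by at most `2^{-(k+1)}` for `m < M` and `2^{k+1}` otherwise, and the total bias is at
most `2^{-(k+1)} γ_0 + 2^{k+1} γ_M`. The choice of `k` makes `4^k ≤ γ_0 / γ_M < 4^{k+1}`, which
balances the two terms to at most `3 √(γ_0 γ_M)`.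
-/

namespace Finpartition

variable {α β : Type*} [Fintype α] [DecidableEq α]

noncomputable def ker (g : α → β) : Finpartition (univ : Finset α) :=
  ofSetoid (Setoid.ker g)

lemma mem_part_ker {g : α → β} {a b : α} : b ∈ (ker g).part a ↔ g a = g b :=
  mem_part_ofSetoid_iff_rel

lemma le_iff_part_eq_part_imp {P Q : Finpartition (univ : Finset α)} :
    P ≤ Q ↔ ∀ a b, P.part a = P.part b → Q.part a = Q.part b := by
  constructor
  · intro hPQ a b hab
    obtain ⟨c, hc, hac⟩ := hPQ (P.part_mem.2 (mem_univ a))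
    rw [Q.part_eq_of_mem hc (hac (P.mem_part (mem_univ a))),
      Q.part_eq_of_mem hc (hac (hab ▸ P.mem_part (mem_univ b)))]
  · intro h t ht
    obtain ⟨a, hat⟩ := P.nonempty_of_mem_parts ht
    refine ⟨Q.part a, Q.part_mem.2 (mem_univ a), fun b hbt => ?_⟩
    rw [← h b a ((P.part_eq_of_mem ht hbt).trans (P.part_eq_of_mem ht hat).symm)]
    exact Q.mem_part (mem_univ b)

lemma part_ker_eq_part_ker_iff {g : α → β} {a b : α} :
    (ker g).part a = (ker g).part b ↔ g a = g b := by
  rw [← mem_part_iff_part_eq_part _ (mem_univ a) (mem_univ b), mem_part_ker, eq_comm]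

lemma le_ker_iff {P : Finpartition (univ : Finset α)} {g : α → β} :
    P ≤ ker g ↔ ∀ a b, P.part a = P.part b → g a = g b := by
  simp only [le_iff_part_eq_part_imp, part_ker_eq_part_ker_iff]

lemma ker_eq_iff {P : Finpartition (univ : Finset α)} {g : α → β} :
    ker g = P ↔ ∀ a b, g a = g b ↔ P.part a = P.part b := by
  rw [le_antisymm_iff, le_ker_iff, le_iff_part_eq_part_imp]
  simp only [part_ker_eq_part_ker_iff]
  exact ⟨fun h a b => ⟨h.1 a b, h.2 a b⟩, fun h => ⟨fun a b => (h a b).1, fun a b => (h a b).2⟩⟩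

def partOf (P : Finpartition (univ : Finset α)) (a : α) : P.parts :=
  ⟨P.part a, P.part_mem.2 (mem_univ a)⟩

lemma partOf_eq_partOf_iff {P : Finpartition (univ : Finset α)} {a b : α} :
    P.partOf a = P.partOf b ↔ P.part a = P.part b :=
  Subtype.ext_iff

lemma partOf_surjective (P : Finpartition (univ : Finset α)) : Function.Surjective P.partOf := by
  rintro ⟨t, ht⟩
  obtain ⟨a, hat⟩ := P.nonempty_of_mem_parts ht
  exact ⟨a, Subtype.ext (P.part_eq_of_mem ht hat)⟩

noncomputable def funPartsEquiv (P : Finpartition (univ : Finset α)) :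
    (P.parts → β) ≃ {g : α → β // P ≤ ker g} where
  toFun h := ⟨h ∘ P.partOf, le_ker_iff.2 fun a b hab => by
    simp only [Function.comp_apply, partOf_eq_partOf_iff.2 hab]⟩
  invFun g t := g.1 (Function.surjInv P.partOf_surjective t)
  left_inv h := funext fun t => by simp only [Function.comp_apply, Function.surjInv_eq]
  right_inv g := Subtype.ext <| funext fun a => le_ker_iff.1 g.2 _ _ <| partOf_eq_partOf_iff.1 <|
    Function.surjInv_eq _ _

noncomputable def embeddingPartsEquiv (P : Finpartition (univ : Finset α)) :
    (P.parts ↪ β) ≃ {g : α → β // ker g = P} where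
  toFun h := ⟨h ∘ P.partOf, ker_eq_iff.2 fun a b => by
    simp only [Function.comp_apply, h.injective.eq_iff, partOf_eq_partOf_iff]⟩
  invFun g := ⟨fun t => g.1 (Function.surjInv P.partOf_surjective t), fun s t hst => by
    rwa [ker_eq_iff.1 g.2, ← partOf_eq_partOf_iff, Function.surjInv_eq P.partOf_surjective,
      Function.surjInv_eq P.partOf_surjective] at hst⟩
  left_inv h := by
    ext t
    simp only [Function.Embedding.coeFn_mk, Function.comp_apply, Function.surjInv_eq]
  right_inv g := Subtype.ext <| funext fun a => (ker_eq_iff.1 g.2 _ _).2 <|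
    partOf_eq_partOf_iff.1 <| Function.surjInv_eq _ _

theorem sum_descFactorial_card_parts (n : ℕ) (σ : Finpartition (univ : Finset α)) :
    ∑ π with σ ≤ π, n.descFactorial #π.parts = n ^ #σ.parts := by
  have hle : Fintype.card {g : α → Fin n // σ ≤ ker g} = n ^ #σ.parts := by
    rw [← Fintype.card_congr σ.funPartsEquiv]
    simp
  have hfib (π : Finpartition (univ : Finset α)) :
      Fintype.card {g : α → Fin n // ker g = π} = n.descFactorial #π.parts := by
    rw [← Fintype.card_congr π.embeddingPartsEquiv, Fintype.card_embedding_eq]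
    simp
  rw [← hle, Fintype.card_subtype, card_eq_sum_card_fiberwise (f := ker)
    (t := {π | σ ≤ π}) fun g hg => by simpa using hg]
  refine sum_congr rfl fun π hπ => ?_
  rw [← hfib, Fintype.card_subtype, filter_filter]
  congr 1
  ext g
  simp only [mem_filter, mem_univ, true_and] at hπ ⊢
  exact ⟨fun h => ⟨h ▸ hπ, h⟩, And.right⟩

end Finpartition

namespace Matrix

variable {ι κ : Type*} [Fintype ι] [Fintype κ]

theorem sum_abs_one_sub_apply_of_mem_colStochastic [DecidableEq ι] {A : Matrix ι ι ℝ}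
    (hA : A ∈ colStochastic ℝ ι) (j : ι) : ∑ i, |(1 - A) i j| = 2 * (1 - A j j) := by
  have hoff : ∑ i ∈ {j}ᶜ, |(1 - A) i j| = ∑ i ∈ {j}ᶜ, A i j := sum_congr rfl fun i hi => by
    rw [sub_apply, one_apply_ne (by simpa using hi), zero_sub, abs_neg,
      abs_of_nonneg (nonneg_of_mem_colStochastic hA)]
  have hcol := sum_col_of_mem_colStochastic hA j
  rw [Fintype.sum_eq_add_sum_compl j] at hcol ⊢
  rw [hoff, sub_apply, one_apply_eq,
    abs_of_nonneg (sub_nonneg.2 (le_one_of_mem_colStochastic hA))]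
  linarith

theorem sum_abs_mulVec_le {A : Matrix ι κ ℝ} {c : ℝ} (hA : ∀ j, ∑ i, |A i j| ≤ c) (x : κ → ℝ) :
    ∑ i, |(A *ᵥ x) i| ≤ c * ∑ j, |x j| :=
  calc ∑ i, |(A *ᵥ x) i| ≤ ∑ i, ∑ j, |A i j| * |x j| :=
        sum_le_sum fun i _ => (abs_sum_le_sum_abs _ _).trans_eq (by simp only [abs_mul])
    _ = ∑ j, (∑ i, |A i j|) * |x j| := by rw [sum_comm]; simp only [sum_mul]
    _ ≤ ∑ j, c * |x j| := sum_le_sum fun j _ => by gcongr; exact hA j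
    _ = c * ∑ j, |x j| := (mul_sum ..).symm

theorem sum_abs_pow_mulVec_le [DecidableEq ι] {A : Matrix ι ι ℝ} {c : ℝ} (hc : 0 ≤ c)
    (hA : ∀ j, ∑ i, |A i j| ≤ c) (n : ℕ) (x : ι → ℝ) :
    ∑ i, |(A ^ n *ᵥ x) i| ≤ c ^ n * ∑ i, |x i| := by
  induction n with
  | zero => simp
  | succ n ih =>
    rw [pow_succ', ← mulVec_mulVec, pow_succ', mul_assoc]
    exact (sum_abs_mulVec_le hA _).trans (mul_le_mul_of_nonneg_left ih hc)

theorem abs_dotProduct_le {v w : ι → ℝ} {a : ℝ} (hv : ∀ i, |v i| ≤ a) :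
    |v ⬝ᵥ w| ≤ a * ∑ i, |w i| :=
  calc |v ⬝ᵥ w| ≤ ∑ i, |v i| * |w i| :=
        (abs_sum_le_sum_abs _ _).trans_eq (by simp only [abs_mul])
    _ ≤ ∑ i, a * |w i| := sum_le_sum fun i _ => by gcongr; exact hv i
    _ = a * ∑ i, |w i| := (mul_sum ..).symm

theorem abs_dotProduct_pow_mulVec_le [DecidableEq ι] {A : Matrix ι ι ℝ} {c a b : ℝ}
    (hc : 0 ≤ c) (hA : ∀ j, ∑ i, |A i j| ≤ c) (n : ℕ) {v x : ι → ℝ} (ha : 0 ≤ a)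
    (hv : ∀ i, |v i| ≤ a) (hx : ∑ i, |x i| ≤ b) :
    |v ⬝ᵥ (A ^ n *ᵥ x)| ≤ c ^ n * (a * b) :=
  calc |v ⬝ᵥ (A ^ n *ᵥ x)| ≤ a * (c ^ n * ∑ i, |x i|) :=
        (abs_dotProduct_le hv).trans <|
          mul_le_mul_of_nonneg_left (sum_abs_pow_mulVec_le hc hA n x) ha
    _ ≤ a * (c ^ n * b) := by gcongr
    _ = c ^ n * (a * b) := by ring

end Matrix

theorem one_sub_descFactorial_div_pow_le {N : ℕ} (hN : 0 < N) (s : ℕ) :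
    1 - (N.descFactorial s : ℝ) / N ^ s ≤ s ^ 2 / N := by
  have hNR : (0 : ℝ) < N := by exact_mod_cast hN
  rcases lt_or_ge N s with hNs | hsN
  · rw [Nat.descFactorial_eq_zero_iff_lt.2 hNs, Nat.cast_zero, zero_div, sub_zero,
      le_div_iff₀ hNR, one_mul]
    have : (N : ℝ) + 1 ≤ s := by exact_mod_cast hNs
    nlinarith
  · -- `N^{(s)} ≥ (N + 1 - s) ^ s = N ^ s (1 + (1 - s) / N) ^ s`, then Bernoulli
    have hlow : (N : ℝ) ^ s * (1 + ((1 : ℝ) - s) / N) ^ s ≤ N.descFactorial s := by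
      have := Nat.pow_sub_le_descFactorial N s
      rw [← mul_pow, mul_add, mul_one, mul_div_cancel₀ _ hNR.ne']
      calc ((N : ℝ) + (1 - s)) ^ s = ((N + 1 - s : ℕ) : ℝ) ^ s := by
            rw [Nat.cast_sub (by omega)]; push_cast; ring
        _ ≤ N.descFactorial s := by exact_mod_cast this
    have hbern := one_add_mul_le_pow (a := ((1 : ℝ) - s) / N) (by
      rw [le_div_iff₀ hNR]; have : (s : ℝ) ≤ N := by exact_mod_cast hsN
      linarith) s
    have hratio : 1 + s * ((1 - s) / N) ≤ (N.descFactorial s : ℝ) / N ^ s := by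
      rw [le_div_iff₀ (by positivity)]
      calc (1 + s * ((1 - s) / N)) * (N : ℝ) ^ s ≤ (1 + ((1 : ℝ) - s) / N) ^ s * N ^ s := by
            gcongr
        _ ≤ N.descFactorial s := by linarith
    have hs : (s : ℝ) * ((1 - s) / N) = s / N - s ^ 2 / N := by field_simp
    have : (0 : ℝ) ≤ s / N := by positivity
    linarith

section Resampling

variable {N m : ℕ}

lemma resampS_nonneg (π σ : Finpartition (univ : Finset (Fin m))) : 0 ≤ resampS N m π σ := by
  unfold resampS
  split_ifs <;> positivity

lemma resampS_mem_colStochastic (hN : 0 < N) : resampS N m ∈ Matrix.colStochastic ℝ _ := by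
  refine Matrix.mem_colStochastic_iff_sum.2 ⟨resampS_nonneg, fun σ => ?_⟩
  have hNs : (N : ℝ) ^ #σ.parts ≠ 0 := pow_ne_zero _ (by exact_mod_cast hN.ne')
  have hsum := congrArg (Nat.cast : ℕ → ℝ) (Finpartition.sum_descFactorial_card_parts N σ)
  push_cast at hsum
  simp only [resampS, ← div_eq_one_iff_eq hNs, sum_filter, sum_div] at hsum ⊢
  rw [← hsum]
  exact sum_congr rfl fun π _ => by split_ifs <;> simp

lemma resampS_apply_self (σ : Finpartition (univ : Finset (Fin m))) :
    resampS N m σ σ = (N.descFactorial #σ.parts : ℝ) / N ^ #σ.parts := by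
  simp [resampS]

lemma sum_abs_one_sub_resampS_le_two (hN : 0 < N) (σ : Finpartition (univ : Finset (Fin m))) :
    ∑ π, |(1 - resampS N m) π σ| ≤ 2 := by
  rw [Matrix.sum_abs_one_sub_apply_of_mem_colStochastic (resampS_mem_colStochastic hN)]
  linarith [resampS_nonneg (N := N) σ σ]

lemma sum_abs_one_sub_resampS_le (hN : 0 < N) (σ : Finpartition (univ : Finset (Fin m))) :
    ∑ π, |(1 - resampS N m) π σ| ≤ 2 * m ^ 2 / N := by
  have hs : (#σ.parts : ℝ) ^ 2 ≤ m ^ 2 := by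
    gcongr
    simpa using σ.card_parts_le_card
  rw [Matrix.sum_abs_one_sub_apply_of_mem_colStochastic (resampS_mem_colStochastic hN),
    resampS_apply_self, mul_div_assoc]
  gcongr
  exact (one_sub_descFactorial_div_pow_le hN _).trans (by gcongr)

lemma sum_abs_one_sub_resampS_le_half (hN : 0 < N) (hm : m < ⌈√((N : ℝ) / 8)⌉₊)
    (σ : Finpartition (univ : Finset (Fin m))) :
    ∑ π, |(1 - resampS N m) π σ| ≤ 1 / 2 := by
  have hm2 : (m : ℝ) ^ 2 < N / 8 := (Real.lt_sqrt (by positivity)).1 (Nat.lt_ceil.1 hm)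
  refine (sum_abs_one_sub_resampS_le hN σ).trans ?_
  rw [div_le_iff₀ (by exact_mod_cast hN)]
  linarith

end Resampling

theorem tsum_le_mul_sum_range_add_mul_tsum {T A : ℕ → ℝ} {p q : ℝ} {M : ℕ}
    (hT : ∀ m, 0 ≤ T m) (hA : Summable A) (hlt : ∀ m < M, T m ≤ p * A m)
    (hge : ∀ m, M ≤ m → T m ≤ q * A m) :
    ∑' m, T m ≤ p * ∑ m ∈ range M, A m + q * ∑' m, A (m + M) := by
  have hAtail := ((summable_nat_add_iff M).2 hA).mul_left q
  have hTtail : Summable fun m => T (m + M) :=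
    .of_nonneg_of_le (fun m => hT _) (fun m => hge _ (by omega)) hAtail
  rw [← ((summable_nat_add_iff M).1 hTtail).sum_add_tsum_nat_add M, mul_sum, ← tsum_mul_left]
  exact add_le_add (sum_le_sum fun m hm => hlt m (mem_range.1 hm))
    (hTtail.tsum_le_tsum (fun m => hge _ (by omega)) hAtail)

lemma div_add_mul_le_three_mul_sqrt {a b t : ℝ} (hb : 0 ≤ b) (ht : 0 < t)
    (hupper : a ≤ t ^ 2 * b) (hlower : t ^ 2 * b ≤ 4 * a) :
    a / t + t * b ≤ 3 * √(a * b) := by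
  have ha : 0 ≤ a := by nlinarith
  have h₁ : a / t ≤ √(a * b) := by
    rw [Real.le_sqrt (by positivity) (by positivity), div_pow, div_le_iff₀ (by positivity)]
    nlinarith
  have h₂ : t * b / 2 ≤ √(a * b) := by
    rw [Real.le_sqrt (by positivity) (by positivity)]
    nlinarith
  linarith

lemma two_pow_two_mul_floor_logb_div_two_le {x : ℝ} (hx : 1 ≤ x) :
    (2 : ℝ) ^ (2 * ⌊Real.logb 2 x / 2⌋₊) ≤ x := by
  have hlog : 0 ≤ Real.logb 2 x / 2 := by have := Real.logb_nonneg one_lt_two hx; positivity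
  have := Nat.floor_le hlog
  rw [← Real.rpow_natCast, ← Real.le_logb_iff_rpow_le one_lt_two (by linarith)]
  push_cast
  linarith

lemma lt_two_pow_two_mul_floor_logb_div_two_add_one {x : ℝ} (hx : 0 < x) :
    x < (2 : ℝ) ^ (2 * (⌊Real.logb 2 x / 2⌋₊ + 1)) := by
  have := Nat.lt_floor_add_one (Real.logb 2 x / 2)
  rw [← Real.rpow_natCast, ← Real.logb_lt_iff_lt_rpow one_lt_two hx]
  push_cast
  linarith

theorem half_pow_mul_add_two_pow_mul_le {a b : ℝ} (hb : 0 < b) (hba : b ≤ a) {k : ℕ}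
    (hk : k = ⌊(Real.logb 2 a - Real.logb 2 b) / 2⌋₊) :
    (1 / 2) ^ (k + 1) * a + 2 ^ (k + 1) * b ≤ 3 * √(a * b) := by
  rw [← Real.logb_div (by linarith) hb.ne'] at hk
  have hx : 1 ≤ a / b := (one_le_div hb).2 hba
  have hlow := two_pow_two_mul_floor_logb_div_two_le hx
  have hup := lt_two_pow_two_mul_floor_logb_div_two_add_one (div_pos (hb.trans_le hba) hb)
  rw [← hk] at hlow hup
  rw [one_div_pow, one_div_mul_eq_div]
  apply div_add_mul_le_three_mul_sqrt hb.le (by positivity)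
  · rw [← pow_mul, mul_comm (k + 1), ← div_le_iff₀ hb]
    exact hup.le
  · rw [← pow_mul, mul_comm (k + 1), mul_add, pow_add, mul_one]
    rw [le_div_iff₀ hb] at hlow
    norm_num
    linarith

/-- Bias reduction beyond moment polynomials: with `M = ⌈√(N/8)⌉`,
`γ_m = Σ_{j ≥ m} α_j β_j` and `k = ⌊(log₂ γ_0 − log₂ γ_M)/2⌋`, the total bias of the
`k`-times iterated bootstrap is at most `4·√(γ_0 γ_M)`. -/
theorem total_bias_bound (N : ℕ) (hN : 8 ≤ N)
    (v f : (m : ℕ) → Finpartition (Finset.univ : Finset (Fin m)) → ℝ)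
    (α β : ℕ → ℝ)
    (hα0 : ∀ m, 0 ≤ α m) (hβ0 : ∀ m, 0 ≤ β m)
    (hv : ∀ (m : ℕ) (π : Finpartition (Finset.univ : Finset (Fin m))), |v m π| ≤ α m)
    (hf : ∀ m : ℕ, ∑ π : Finpartition (Finset.univ : Finset (Fin m)), |f m π| ≤ β m)
    (hsum : Summable fun j : ℕ => α j * β j)
    (γ : ℕ → ℝ) (hγ : ∀ m : ℕ, γ m = ∑' j : ℕ, α (m + j) * β (m + j))
    (M : ℕ) (hM : M = ⌈Real.sqrt ((N : ℝ) / 8)⌉₊)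
    (hγM : 0 < γ M) (hγ0 : γ M ≤ γ 0)
    (k : ℕ) (hk : k = ⌊(Real.logb 2 (γ 0) - Real.logb 2 (γ M)) / 2⌋₊) :
    ∑' m : ℕ,
        |∑ π : Finpartition (Finset.univ : Finset (Fin m)),
          v m π * ((1 - resampS N m) ^ (k + 1)).mulVec (f m) π|
      ≤ 4 * Real.sqrt (γ 0 * γ M) := by
  have hN0 : 0 < N := by omega
  have hbias (m : ℕ) {c : ℝ} (hc : 0 ≤ c) (hcol : ∀ σ, ∑ π, |(1 - resampS N m) π σ| ≤ c) :=
    Matrix.abs_dotProduct_pow_mulVec_le hc hcol (k + 1) (hα0 m) (hv m) (hf m)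
  have hγ0_eq : γ 0 = ∑' m, α m * β m := by simp [hγ]
  have hγM_eq : γ M = ∑' m, α (m + M) * β (m + M) := by simp [hγ, add_comm]
  calc _ ≤ (1 / 2) ^ (k + 1) * ∑ m ∈ range M, α m * β m + 2 ^ (k + 1) * γ M := by
        rw [hγM_eq]
        refine tsum_le_mul_sum_range_add_mul_tsum (fun m => abs_nonneg _) hsum
          (fun m hm => hbias m (by norm_num) (sum_abs_one_sub_resampS_le_half hN0 (hM ▸ hm)))
          (fun m _ => hbias m zero_le_two (sum_abs_one_sub_resampS_le_two hN0))
    _ ≤ (1 / 2) ^ (k + 1) * γ 0 + 2 ^ (k + 1) * γ M := by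
        rw [hγ0_eq]
        gcongr
        exact hsum.sum_le_tsum _ fun m _ => mul_nonneg (hα0 m) (hβ0 m)
    _ ≤ 3 * √(γ 0 * γ M) := half_pow_mul_add_two_pow_mul_le hγM hγ0 hk
    _ ≤ 4 * √(γ 0 * γ M) := by linarith [Real.sqrt_nonneg (γ 0 * γ M)]
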